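/- Every Henstock–Kurzweil integrable function on [a,b] is Lebesgue measurable. -/

import Mathlib

def IsTaggedPartition (a b : ℝ) (n : ℕ) (t x : ℕ → ℝ) : Prop :=
  t 0 = a ∧ t n = b ∧ (∀ j < n, t j < t (j + 1)) ∧
    ∀ j < n, x j ∈ Set.Icc (t j) (t (j + 1))

def IsFine (δ : ℝ → ℝ) (n : ℕ) (t x : ℕ → ℝ) : Prop :=
  ∀ j < n, t (j + 1) - t j < δ (x j)

def RiemannSum (g : ℝ → ℝ) (n : ℕ) (t x : ℕ → ℝ) : ℝ :=
  ∑ j ∈ Finset.range n, g (x j) * (t (j + 1) - t j)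

/-- `f` is Henstock–Kurzweil integrable on `[a,b]` with integral `α`. -/
def HKIntegral (a b : ℝ) (f : ℝ → ℝ) (α : ℝ) : Prop :=
  ∀ ε > 0, ∃ δ : ℝ → ℝ, (∀ y ∈ Set.Icc a b, 0 < δ y) ∧
    ∀ (n : ℕ) (t x : ℕ → ℝ), IsTaggedPartition a b n t x → IsFine δ n t x →
      |RiemannSum f n t x - α| < ε

/-!
The indefinite integral `F x = ∫ₐˣ f` has right derivative `f x` at almost every `x ∈ [a, b]`.
By the Saks–Henstock lemma, for a gauge `δ` of accuracy `ε`, any disjoint finite family of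
`δ`-fine intervals `[x, v]` on which `F v - F x` differs from `f x * (v - x)` by more than
`η * (v - x)` has total length at most `2ε / η`. These intervals form a Vitali cover of the set
where the right difference quotients of `F` at `x` do not eventually stay within `η` of `f x`,
so that set is null. As the right derivative `x ↦ derivWithin F (Ici x) x` of any function is
Borel measurable, `f` is almost everywhere equal to a measurable function.
-/

open Set Filter Topology MeasureTheory

def appendSeq (n : ℕ) (t s : ℕ → ℝ) : ℕ → ℝ := fun j => if j < n then t j else s (j - n)

section Append

variable {n m j : ℕ} {t s x y : ℕ → ℝ}

lemma appendSeq_of_lt (hj : j < n) : appendSeq n t s j = t j := if_pos hj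

lemma appendSeq_add (n j : ℕ) (t s : ℕ → ℝ) : appendSeq n t s (n + j) = s j := by
  simp [appendSeq]

lemma appendSeq_of_le (hts : t n = s 0) (hj : j ≤ n) : appendSeq n t s j = t j := by
  rcases hj.lt_or_eq with hj | rfl
  · exact appendSeq_of_lt hj
  · simpa [hts] using appendSeq_add j 0 t s

lemma forall_lt_add_iff {P : ℕ → Prop} :
    (∀ j < n + m, P j) ↔ (∀ j < n, P j) ∧ ∀ i < m, P (n + i) := by
  refine ⟨fun h => ⟨fun j hj => h j (by omega), fun i hi => h _ (by omega)⟩, fun h j hj => ?_⟩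
  rcases lt_or_ge j n with hjn | hjn
  · exact h.1 j hjn
  · obtain ⟨i, rfl⟩ := Nat.exists_eq_add_of_le hjn
    exact h.2 i (by omega)

lemma appendSeq_interval (hts : t n = s 0) {P : ℝ → ℝ → ℝ → Prop}
    (h₁ : ∀ j < n, P (t j) (t (j + 1)) (x j)) (h₂ : ∀ i < m, P (s i) (s (i + 1)) (y i)) :
    ∀ j < n + m, P (appendSeq n t s j) (appendSeq n t s (j + 1)) (appendSeq n x y j) := by
  refine forall_lt_add_iff.2 ⟨fun j hj => ?_, fun i hi => ?_⟩
  · rw [appendSeq_of_le hts hj.le, appendSeq_of_le hts hj, appendSeq_of_lt hj]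
    exact h₁ j hj
  · rw [appendSeq_add, add_assoc, appendSeq_add, appendSeq_add]
    exact h₂ i hi

lemma IsTaggedPartition.append {a c d : ℝ} (h₁ : IsTaggedPartition a c n t x)
    (h₂ : IsTaggedPartition c d m s y) :
    IsTaggedPartition a d (n + m) (appendSeq n t s) (appendSeq n x y) := by
  have hts : t n = s 0 := h₁.2.1.trans h₂.1.symm
  refine ⟨?_, ?_,
    appendSeq_interval (P := fun u v _ => u < v) (x := x) (y := y) hts h₁.2.2.1 h₂.2.2.1,
    appendSeq_interval (P := fun u v z => z ∈ Icc u v) hts h₁.2.2.2 h₂.2.2.2⟩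
  · rw [appendSeq_of_le hts n.zero_le, h₁.1]
  · rw [appendSeq_add, h₂.2.1]

lemma IsTaggedPartition.isFine_append {a c d : ℝ} {δ : ℝ → ℝ}
    (h₁ : IsTaggedPartition a c n t x) (h₂ : IsTaggedPartition c d m s y)
    (hF₁ : IsFine δ n t x) (hF₂ : IsFine δ m s y) :
    IsFine δ (n + m) (appendSeq n t s) (appendSeq n x y) :=
  appendSeq_interval (P := fun u v z => v - u < δ z) (h₁.2.1.trans h₂.1.symm) hF₁ hF₂

lemma IsTaggedPartition.riemannSum_append {a c d : ℝ} (h₁ : IsTaggedPartition a c n t x)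
    (h₂ : IsTaggedPartition c d m s y) (g : ℝ → ℝ) :
    RiemannSum g (n + m) (appendSeq n t s) (appendSeq n x y)
      = RiemannSum g n t x + RiemannSum g m s y := by
  have hts : t n = s 0 := h₁.2.1.trans h₂.1.symm
  unfold RiemannSum
  rw [Finset.sum_range_add]
  congr 1 <;> refine Finset.sum_congr rfl fun j hj => ?_ <;> rw [Finset.mem_range] at hj
  · rw [appendSeq_of_le hts hj.le, appendSeq_of_le hts hj, appendSeq_of_lt hj]
  · rw [appendSeq_add, add_assoc, appendSeq_add, appendSeq_add]

end Append

lemma isTaggedPartition_zero (u : ℝ) (x : ℕ → ℝ) : IsTaggedPartition u u 0 (fun _ => u) x :=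
  ⟨rfl, rfl, fun _ h => absurd h (Nat.not_lt_zero _), fun _ h => absurd h (Nat.not_lt_zero _)⟩

lemma isFine_zero (δ : ℝ → ℝ) (t x : ℕ → ℝ) : IsFine δ 0 t x :=
  fun _ h => absurd h (Nat.not_lt_zero _)

section Single

variable {u v z : ℝ}

lemma isTaggedPartition_one (huv : u < v) (hz : z ∈ Icc u v) :
    IsTaggedPartition u v 1 (fun j => if j = 0 then u else v) (fun _ => z) :=
  ⟨rfl, rfl, fun j hj => by simpa [Nat.lt_one_iff.1 hj] using huv,
    fun j hj => by simpa [Nat.lt_one_iff.1 hj] using hz⟩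

lemma isFine_one {δ : ℝ → ℝ} (h : v - u < δ z) :
    IsFine δ 1 (fun j => if j = 0 then u else v) (fun _ => z) :=
  fun j hj => by simpa [Nat.lt_one_iff.1 hj] using h

lemma riemannSum_one (g : ℝ → ℝ) :
    RiemannSum g 1 (fun j => if j = 0 then u else v) (fun _ => z) = g z * (v - u) := by
  simp [RiemannSum]

end Single

lemma IsTaggedPartition.exists_extend {a c d z : ℝ} {δ : ℝ → ℝ} {n : ℕ} {t x : ℕ → ℝ}
    (hP : IsTaggedPartition a c n t x) (hF : IsFine δ n t x) (hcd : c < d) (hz : z ∈ Icc c d)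
    (hfine : d - c < δ z) :
    ∃ t' x', IsTaggedPartition a d (n + 1) t' x' ∧ IsFine δ (n + 1) t' x' ∧
      ∀ g, RiemannSum g (n + 1) t' x' = RiemannSum g n t x + g z * (d - c) := by
  have hQ := isTaggedPartition_one hcd hz
  refine ⟨_, _, hP.append hQ, hP.isFine_append hQ hF (isFine_one hfine), fun g => ?_⟩
  rw [hP.riemannSum_append hQ, riemannSum_one]

/-- **Cousin's lemma**. -/
theorem exists_isTaggedPartition_isFine {u v : ℝ} (huv : u ≤ v) {δ : ℝ → ℝ}
    (hδ : ∀ y ∈ Icc u v, 0 < δ y) : ∃ n t x, IsTaggedPartition u v n t x ∧ IsFine δ n t x := by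
  set S := {c ∈ Icc u v | ∃ n t x, IsTaggedPartition u c n t x ∧ IsFine δ n t x}
  have hu : u ∈ S :=
    ⟨⟨le_rfl, huv⟩, 0, _, _, isTaggedPartition_zero u (fun _ => u), isFine_zero δ _ _⟩
  have hbdd : BddAbove S := ⟨v, fun c hc => hc.1.2⟩
  set s := sSup S
  have hs : s ∈ Icc u v := ⟨le_csSup hbdd hu, csSup_le ⟨u, hu⟩ fun c hc => hc.1.2⟩
  have hδs := hδ s hs
  have extend : ∀ c ∈ S, ∀ d ≤ v, c < d → s ∈ Icc c d → d - c < δ s → d ∈ S := by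
    rintro c ⟨hc, n, t, x, hP, hF⟩ d hdv hcd hsc hcdδ
    obtain ⟨t', x', hP', hF', -⟩ := hP.exists_extend hF hcd hsc hcdδ
    exact ⟨⟨hc.1.trans hcd.le, hdv⟩, _, _, _, hP', hF'⟩
  obtain ⟨c, hcS, hc⟩ := exists_lt_of_lt_csSup ⟨u, hu⟩ (sub_lt_self s hδs)
  have hcs : c ≤ s := le_csSup hbdd hcS
  have hsS : s ∈ S := by
    rcases hcs.lt_or_eq with hcs | rfl
    · exact extend c hcS s hs.2 hcs ⟨hcs.le, le_rfl⟩ (by linarith)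
    · exact hcS
  obtain hsv | hsv := hs.2.lt_or_eq
  · set d := min v (s + δ s / 2)
    have hsd : s < d := lt_min hsv (by linarith)
    have hdS : d ∈ S := extend s hsS d (min_le_left _ _) hsd ⟨le_rfl, hsd.le⟩
      (by linarith [min_le_right v (s + δ s / 2)])
    exact absurd (le_csSup hbdd hdS) hsd.not_ge
  · obtain ⟨-, n, t, x, hP, hF⟩ := hsS
    exact ⟨n, t, x, hsv ▸ hP, hF⟩

lemma IsFine.mono {δ δ' : ℝ → ℝ} {n : ℕ} {t x : ℕ → ℝ} (hF : IsFine δ n t x)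
    (h : ∀ y, δ y ≤ δ' y) : IsFine δ' n t x :=
  fun j hj => (hF j hj).trans_le (h (x j))

lemma exists_isTaggedPartition_isFine_isFine {u v : ℝ} (huv : u ≤ v) {δ₁ δ₂ : ℝ → ℝ}
    (h₁ : ∀ y ∈ Icc u v, 0 < δ₁ y) (h₂ : ∀ y ∈ Icc u v, 0 < δ₂ y) :
    ∃ n t x, IsTaggedPartition u v n t x ∧ IsFine δ₁ n t x ∧ IsFine δ₂ n t x := by
  obtain ⟨n, t, x, hP, hF⟩ :=
    exists_isTaggedPartition_isFine huv (δ := fun y => min (δ₁ y) (δ₂ y)) fun y hy =>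
      lt_min (h₁ y hy) (h₂ y hy)
  exact ⟨n, t, x, hP, hF.mono fun _ => min_le_left _ _, hF.mono fun _ => min_le_right _ _⟩

def IsHKGauge (a b : ℝ) (f : ℝ → ℝ) (α ε : ℝ) (δ : ℝ → ℝ) : Prop :=
  (∀ y ∈ Icc a b, 0 < δ y) ∧
    ∀ n t x, IsTaggedPartition a b n t x → IsFine δ n t x → |RiemannSum f n t x - α| < ε

/-- An arbitrary real number when `f` is not HK integrable on `[u, v]`. -/
noncomputable def hkIntegral (f : ℝ → ℝ) (u v : ℝ) : ℝ := Classical.epsilon (HKIntegral u v f)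

lemma sum_abs_le_two_mul_of_forall_subset {ι : Type*} {s : Finset ι} {g : ι → ℝ} {ε : ℝ}
    (h : ∀ r ⊆ s, |∑ i ∈ r, g i| ≤ ε) : ∑ i ∈ s, |g i| ≤ 2 * ε := by
  classical
  have hpos : ∑ i ∈ s with 0 ≤ g i, |g i| ≤ ε := by
    rw [Finset.sum_congr rfl fun i hi => abs_of_nonneg (Finset.mem_filter.1 hi).2]
    exact (le_abs_self _).trans (h _ (Finset.filter_subset _ s))
  have hneg : ∑ i ∈ s with ¬0 ≤ g i, |g i| ≤ ε := by
    rw [Finset.sum_congr rfl fun i hi => abs_of_neg (not_le.1 (Finset.mem_filter.1 hi).2),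
      Finset.sum_neg_distrib]
    exact (neg_le_abs _).trans (h _ (Finset.filter_subset _ s))
  rw [← Finset.sum_filter_add_sum_filter_not s (fun i => 0 ≤ g i)]
  linarith

lemma volume_closedBall_le_six_mul_volume_Icc (x v : ℝ) :
    volume (Metric.closedBall x (3 * (v - x))) ≤ (6 : NNReal) * volume (Icc x v) := by
  rw [Real.volume_closedBall, Real.volume_Icc, ← mul_assoc,
    ENNReal.ofReal_mul (by norm_num : (0 : ℝ) ≤ 2 * 3)]
  norm_num

section HKIntegralTheory

variable {a b u v w α β γ ε : ℝ} {f δ : ℝ → ℝ}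

/-- Complete both partitions by the same fine partitions of `[a, u]` and `[v, b]`. -/
lemma IsHKGauge.abs_sub_lt {n n' : ℕ} {t x t' x' : ℕ → ℝ} (hδ : IsHKGauge a b f α ε δ)
    (hu : a ≤ u) (huv : u ≤ v) (hv : v ≤ b)
    (hP : IsTaggedPartition u v n t x) (hF : IsFine δ n t x)
    (hP' : IsTaggedPartition u v n' t' x') (hF' : IsFine δ n' t' x') :
    |RiemannSum f n t x - RiemannSum f n' t' x'| < 2 * ε := by
  obtain ⟨m₁, s₁, y₁, hQ₁, hG₁⟩ := exists_isTaggedPartition_isFine hu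
    fun y hy => hδ.1 y ⟨hy.1, hy.2.trans (huv.trans hv)⟩
  obtain ⟨m₂, s₂, y₂, hQ₂, hG₂⟩ := exists_isTaggedPartition_isFine hv
    fun y hy => hδ.1 y ⟨(hu.trans huv).trans hy.1, hy.2⟩
  have complete : ∀ k (r z : ℕ → ℝ), IsTaggedPartition u v k r z → IsFine δ k r z →
      |RiemannSum f m₁ s₁ y₁ + RiemannSum f k r z + RiemannSum f m₂ s₂ y₂ - α| < ε := by
    intro k r z hR hG
    have h := hδ.2 _ _ _ ((hQ₁.append hR).append hQ₂)
      ((hQ₁.append hR).isFine_append hQ₂ (hQ₁.isFine_append hR hG₁ hG) hG₂)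
    rwa [(hQ₁.append hR).riemannSum_append hQ₂, hQ₁.riemannSum_append hR] at h
  have h := complete n t x hP hF
  have h' := complete n' t' x' hP' hF'
  rw [abs_lt] at h h' ⊢
  constructor <;> linarith

/-- **Cauchy criterion** for the Henstock–Kurzweil integral. -/
theorem exists_hkIntegral_of_cauchy (huv : u ≤ v)
    (h : ∀ ε > 0, ∃ δ : ℝ → ℝ, (∀ y ∈ Icc u v, 0 < δ y) ∧ ∀ n t x n' t' x',
      IsTaggedPartition u v n t x → IsFine δ n t x → IsTaggedPartition u v n' t' x' →
        IsFine δ n' t' x' → |RiemannSum f n t x - RiemannSum f n' t' x'| < ε) :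
    ∃ β, HKIntegral u v f β := by
  choose δ hδpos hδ using fun k : ℕ => h (1 / (k + 1)) Nat.one_div_pos_of_nat
  choose n t x hP hF using fun k => exists_isTaggedPartition_isFine huv (hδpos k)
  set S : ℕ → ℝ := fun k => RiemannSum f (n k) (t k) (x k)
  have key : ∀ k l m r z, IsTaggedPartition u v m r z → IsFine (δ k) m r z →
      |RiemannSum f m r z - S l| < 1 / (k + 1) + 1 / (l + 1) := by
    intro k l m r z hR hG
    obtain ⟨m', r', z', hR', hGk, hGl⟩ :=
      exists_isTaggedPartition_isFine_isFine huv (hδpos k) (hδpos l)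
    calc |RiemannSum f m r z - S l|
        ≤ |RiemannSum f m r z - RiemannSum f m' r' z'| + |RiemannSum f m' r' z' - S l| :=
          abs_sub_le _ _ _
      _ < _ := add_lt_add (hδ k _ _ _ _ _ _ hR hG hR' hGk) (hδ l _ _ _ _ _ _ hR' hGl (hP l) (hF l))
  have hS : CauchySeq S := by
    refine cauchySeq_of_le_tendsto_0 (fun N : ℕ => 2 * (1 / ((N : ℝ) + 1)))
      (fun k l N hk hl => ?_)
      (by simpa using tendsto_one_div_add_atTop_nhds_zero_nat.const_mul (2 : ℝ))
    rw [Real.dist_eq]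
    linarith [key k l _ _ _ (hP k) (hF k), Nat.one_div_le_one_div (α := ℝ) hk,
      Nat.one_div_le_one_div (α := ℝ) hl]
  obtain ⟨β, hβ⟩ := cauchySeq_tendsto_of_complete hS
  refine ⟨β, fun ε hε => ?_⟩
  obtain ⟨k, hk⟩ := exists_nat_one_div_lt hε
  refine ⟨δ k, hδpos k, fun m r z hR hG => ?_⟩
  have hlim : |RiemannSum f m r z - β| ≤ 1 / (k + 1) :=
    le_of_tendsto_of_tendsto' (tendsto_const_nhds.sub hβ).abs
      (by simpa using tendsto_one_div_add_atTop_nhds_zero_nat.const_add (1 / ((k : ℝ) + 1)))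
      fun l => (key k l m r z hR hG).le
  exact hlim.trans_lt hk

namespace HKIntegral

lemma exists_isHKGauge (hf : HKIntegral a b f α) (hε : 0 < ε) : ∃ δ, IsHKGauge a b f α ε δ :=
  hf ε hε

lemma exists_subinterval (hf : HKIntegral a b f α) (hu : a ≤ u) (huv : u ≤ v) (hv : v ≤ b) :
    ∃ β, HKIntegral u v f β := by
  refine exists_hkIntegral_of_cauchy huv fun ε hε => ?_
  obtain ⟨δ, hδ⟩ := hf.exists_isHKGauge (half_pos hε)
  refine ⟨δ, fun y hy => hδ.1 y ⟨hu.trans hy.1, hy.2.trans hv⟩,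
    fun n t x n' t' x' hP hF hP' hF' => ?_⟩
  simpa [mul_div_cancel₀] using hδ.abs_sub_lt hu huv hv hP hF hP' hF'

lemma unique (huv : u ≤ v) (hβ : HKIntegral u v f β) (hγ : HKIntegral u v f γ) : β = γ := by
  refine eq_of_forall_dist_le fun ε hε => ?_
  obtain ⟨δ₁, hpos₁, hδ₁⟩ := hβ (ε / 2) (half_pos hε)
  obtain ⟨δ₂, hpos₂, hδ₂⟩ := hγ (ε / 2) (half_pos hε)
  obtain ⟨n, t, x, hP, hF₁, hF₂⟩ := exists_isTaggedPartition_isFine_isFine huv hpos₁ hpos₂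
  have h₁ := hδ₁ n t x hP hF₁
  have h₂ := hδ₂ n t x hP hF₂
  rw [abs_lt] at h₁ h₂
  rw [Real.dist_eq, abs_le]
  constructor <;> linarith

lemma add_eq (huv : u ≤ v) (hvw : v ≤ w) (hβ : HKIntegral u v f β) (hγ : HKIntegral v w f γ)
    {ζ : ℝ} (hζ : HKIntegral u w f ζ) : β + γ = ζ := by
  refine eq_of_forall_dist_le fun ε hε => ?_
  obtain ⟨δ₁, hpos₁, hδ₁⟩ := hβ (ε / 3) (by positivity)
  obtain ⟨δ₂, hpos₂, hδ₂⟩ := hγ (ε / 3) (by positivity)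
  obtain ⟨δ₃, hpos₃, hδ₃⟩ := hζ (ε / 3) (by positivity)
  obtain ⟨n, t, x, hP, hF₁, hF₃⟩ := exists_isTaggedPartition_isFine_isFine huv hpos₁
    fun y hy => hpos₃ y ⟨hy.1, hy.2.trans hvw⟩
  obtain ⟨m, s, z, hQ, hG₂, hG₃⟩ := exists_isTaggedPartition_isFine_isFine hvw hpos₂
    fun y hy => hpos₃ y ⟨huv.trans hy.1, hy.2⟩
  have h₁ := hδ₁ n t x hP hF₁
  have h₂ := hδ₂ m s z hQ hG₂
  have h₃ := hδ₃ _ _ _ (hP.append hQ) (hP.isFine_append hQ hF₃ hG₃)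
  rw [hP.riemannSum_append hQ] at h₃
  rw [abs_lt] at h₁ h₂ h₃
  rw [Real.dist_eq, abs_le]
  constructor <;> linarith

lemma to_hkIntegral (hβ : HKIntegral u v f β) : HKIntegral u v f (hkIntegral f u v) :=
  Classical.epsilon_spec ⟨β, hβ⟩

lemma hkIntegral_eq (huv : u ≤ v) (hβ : HKIntegral u v f β) : hkIntegral f u v = β :=
  hβ.to_hkIntegral.unique huv hβ

lemma subinterval (hf : HKIntegral a b f α) (hu : a ≤ u) (huv : u ≤ v) (hv : v ≤ b) :
    HKIntegral u v f (hkIntegral f u v) :=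
  (hf.exists_subinterval hu huv hv).choose_spec.to_hkIntegral

lemma hkIntegral_add (hf : HKIntegral a b f α) (hu : a ≤ u) (huv : u ≤ v) (hvw : v ≤ w)
    (hw : w ≤ b) : hkIntegral f u v + hkIntegral f v w = hkIntegral f u w :=
  add_eq huv hvw (hf.subinterval hu huv (hvw.trans hw)) (hf.subinterval (hu.trans huv) hvw hw)
    (hf.subinterval hu (huv.trans hvw) hw)

lemma exists_isFine_abs_sub_lt (hβ : HKIntegral u v f β) (huv : u ≤ v)
    (hδ : ∀ y ∈ Icc u v, 0 < δ y) {θ : ℝ} (hθ : 0 < θ) :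
    ∃ n t x, IsTaggedPartition u v n t x ∧ IsFine δ n t x ∧ |RiemannSum f n t x - β| < θ := by
  obtain ⟨δ', hpos', hδ'⟩ := hβ θ hθ
  obtain ⟨n, t, x, hP, hF, hF'⟩ := exists_isTaggedPartition_isFine_isFine huv hδ hpos'
  exact ⟨n, t, x, hP, hF, hδ' n t x hP hF'⟩

end HKIntegral

structure IsFinePartialPartition {ι : Type*} (δ : ℝ → ℝ) (a b : ℝ) (s : Finset ι)
    (u v z : ι → ℝ) : Prop where
  le_left : ∀ i ∈ s, a ≤ u i
  left_lt : ∀ i ∈ s, u i < v i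
  right_le : ∀ i ∈ s, v i ≤ b
  tag_mem : ∀ i ∈ s, z i ∈ Icc (u i) (v i)
  isFine : ∀ i ∈ s, v i - u i < δ (z i)
  pairwiseDisjoint : (s : Set ι).PairwiseDisjoint fun i => Ioo (u i) (v i)

namespace IsFinePartialPartition

variable {ι : Type*} {s r : Finset ι} {u v z : ι → ℝ}

lemma subset (hs : IsFinePartialPartition δ a b s u v z) (hr : r ⊆ s) :
    IsFinePartialPartition δ a b r u v z where
  le_left i hi := hs.le_left i (hr hi)
  left_lt i hi := hs.left_lt i (hr hi)
  right_le i hi := hs.right_le i (hr hi)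
  tag_mem i hi := hs.tag_mem i (hr hi)
  isFine i hi := hs.isFine i (hr hi)
  pairwiseDisjoint := hs.pairwiseDisjoint.subset (by simpa using hr)

lemma of_insert_of_forall_le [DecidableEq ι] {m : ι}
    (hs : IsFinePartialPartition δ a b (insert m s) u v z) (hm : m ∉ s)
    (hmax : ∀ i ∈ s, u i ≤ u m) : IsFinePartialPartition δ a (u m) s u v z where
  __ := hs.subset (Finset.subset_insert m s)
  right_le i hi := by
    have hdisj : Disjoint (Ioo (u i) (v i)) (Ioo (u m) (v m)) :=
      hs.pairwiseDisjoint (by simp [hi]) (by simp) (ne_of_mem_of_not_mem hi hm)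
    rw [Ioo_disjoint_Ioo, max_eq_right (hmax i hi)] at hdisj
    exact (min_le_iff.1 hdisj).resolve_right (hs.left_lt m (by simp)).not_ge

end IsFinePartialPartition

section SaksHenstock

variable {ι : Type*} {s : Finset ι} {u v z : ι → ℝ}

/-- Fill the gaps between the intervals by fine partitions whose Riemann sums are `θ`-close to
the integral. -/
lemma HKIntegral.exists_isFine_abs_riemannSum_sub_le [DecidableEq ι] (hf : HKIntegral a b f α)
    (hδ : ∀ y ∈ Icc a b, 0 < δ y) {θ : ℝ} (hθ : 0 < θ) (s : Finset ι) :
    ∀ c, a ≤ c → c ≤ b → IsFinePartialPartition δ a c s u v z →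
      ∃ n t x, IsTaggedPartition a c n t x ∧ IsFine δ n t x ∧
        |RiemannSum f n t x - (hkIntegral f a c +
          ∑ i ∈ s, (f (z i) * (v i - u i) - hkIntegral f (u i) (v i)))| ≤ (s.card + 1) * θ := by
  induction s using Finset.induction_on_max_value u with
  | empty =>
    intro c hac hcb _
    obtain ⟨n, t, x, hP, hF, hS⟩ := (hf.subinterval le_rfl hac hcb).exists_isFine_abs_sub_lt hac
      (fun y hy => hδ y ⟨hy.1, hy.2.trans hcb⟩) hθ
    exact ⟨n, t, x, hP, hF, by simpa using hS.le⟩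
  | insert m s hm hmax ih =>
    intro c hac hcb hs
    have hma : a ≤ u m := hs.le_left m (by simp)
    have hmv : u m < v m := hs.left_lt m (by simp)
    have hmc : v m ≤ c := hs.right_le m (by simp)
    obtain ⟨n, t, x, hP, hF, hS⟩ :=
      ih (u m) hma (hmv.le.trans (hmc.trans hcb)) (hs.of_insert_of_forall_le hm hmax)
    obtain ⟨t', x', hP', hF', hS'⟩ :=
      hP.exists_extend hF hmv (hs.tag_mem m (by simp)) (hs.isFine m (by simp))
    obtain ⟨k, r, y, hQ, hG, hT⟩ :=
      (hf.subinterval (hma.trans hmv.le) hmc hcb).exists_isFine_abs_sub_lt hmc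
        (fun y hy => hδ y ⟨hma.trans (hmv.le.trans hy.1), hy.2.trans hcb⟩) hθ
    refine ⟨_, _, _, hP'.append hQ, hP'.isFine_append hQ hF' hG, ?_⟩
    rw [hP'.riemannSum_append hQ, hS', Finset.sum_insert hm, Finset.card_insert_of_notMem hm,
      ← hf.hkIntegral_add le_rfl (hma.trans hmv.le) hmc hcb,
      ← hf.hkIntegral_add le_rfl hma hmv.le (hmc.trans hcb)]
    rw [abs_le] at hS ⊢
    rw [abs_lt] at hT
    push_cast
    constructor <;> linarith

/-- **Saks–Henstock lemma**. -/
theorem IsHKGauge.abs_sum_sub_hkIntegral_le (hf : HKIntegral a b f α) (hab : a ≤ b)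
    (hδ : IsHKGauge a b f α ε δ) (hs : IsFinePartialPartition δ a b s u v z) :
    |∑ i ∈ s, (f (z i) * (v i - u i) - hkIntegral f (u i) (v i))| ≤ ε := by
  classical
  refine le_of_forall_pos_lt_add fun η hη => ?_
  obtain ⟨n, t, x, hP, hF, hS⟩ := hf.exists_isFine_abs_riemannSum_sub_le hδ.1
    (div_pos hη s.card.cast_add_one_pos) s b hab le_rfl hs
  rw [hf.hkIntegral_eq hab, mul_div_cancel₀ _ s.card.cast_add_one_pos.ne'] at hS
  have hα := hδ.2 n t x hP hF
  rw [abs_le] at hS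
  rw [abs_lt] at hα ⊢
  constructor <;> linarith

lemma IsHKGauge.sum_abs_sub_hkIntegral_le (hf : HKIntegral a b f α) (hab : a ≤ b)
    (hδ : IsHKGauge a b f α ε δ) (hs : IsFinePartialPartition δ a b s u v z) :
    ∑ i ∈ s, |f (z i) * (v i - u i) - hkIntegral f (u i) (v i)| ≤ 2 * ε :=
  sum_abs_le_two_mul_of_forall_subset fun _ hr => hδ.abs_sum_sub_hkIntegral_le hf hab (hs.subset hr)

end SaksHenstock

lemma IsHKGauge.mul_sum_sub_le {ι : Type*} {s : Finset ι} {u v z : ι → ℝ} {η : ℝ}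
    (hf : HKIntegral a b f α) (hab : a ≤ b) (hδ : IsHKGauge a b f α ε δ)
    (hs : IsFinePartialPartition δ a b s u v z)
    (hbad : ∀ i ∈ s, η * (v i - u i) < |f (z i) * (v i - u i) - hkIntegral f (u i) (v i)|) :
    η * ∑ i ∈ s, (v i - u i) ≤ 2 * ε := by
  rw [Finset.mul_sum]
  exact (Finset.sum_le_sum fun i hi => (hbad i hi).le).trans
    (hδ.sum_abs_sub_hkIntegral_le hf hab hs)

lemma IsHKGauge.tsum_volume_le (hf : HKIntegral a b f α) (hab : a ≤ b)
    (hδ : IsHKGauge a b f α ε δ) {η : ℝ} (hη : 0 < η) {W : Set (ℝ × ℝ)}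
    (hW : ∀ p ∈ W, a ≤ p.1 ∧ p.1 < p.2 ∧ p.2 ≤ b ∧ p.2 - p.1 < δ p.1 ∧
      η * (p.2 - p.1) < |f p.1 * (p.2 - p.1) - hkIntegral f p.1 p.2|)
    (hWdisj : W.PairwiseDisjoint fun p => Icc p.1 p.2) :
    ∑' p : W, volume (Icc p.1.1 p.1.2) ≤ ENNReal.ofReal (2 * ε / η) := by
  rw [ENNReal.tsum_eq_iSup_sum]
  refine iSup_le fun s => ?_
  have hs : IsFinePartialPartition δ a b s (fun p : W => p.1.1) (fun p => p.1.2)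
      (fun p => p.1.1) :=
    { le_left := fun p _ => (hW _ p.2).1
      left_lt := fun p _ => (hW _ p.2).2.1
      right_le := fun p _ => (hW _ p.2).2.2.1
      tag_mem := fun p _ => ⟨le_rfl, (hW _ p.2).2.1.le⟩
      isFine := fun p _ => (hW _ p.2).2.2.2.1
      pairwiseDisjoint := fun p _ q _ hpq => (hWdisj p.2 q.2 (Subtype.coe_injective.ne hpq)).mono
        Ioo_subset_Icc_self Ioo_subset_Icc_self }
  simp_rw [Real.volume_Icc]
  rw [← ENNReal.ofReal_sum_of_nonneg fun (p : W) _ => sub_nonneg.2 (hW _ p.2).2.1.le]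
  refine ENNReal.ofReal_le_ofReal ?_
  rw [le_div_iff₀ hη, mul_comm]
  exact hδ.mul_sum_sub_le hf hab hs fun p _ => (hW _ p.2).2.2.2.2

theorem IsHKGauge.volume_setOf_frequently_lt_le (hf : HKIntegral a b f α) (hab : a ≤ b)
    (hδ : IsHKGauge a b f α ε δ) {η : ℝ} (hη : 0 < η) :
    volume {x ∈ Ico a b | ∃ᶠ v in 𝓝[>] x, η * (v - x) < |f x * (v - x) - hkIntegral f x v|}
      ≤ ENNReal.ofReal (2 * ε / η) := by
  set E := {x ∈ Ico a b | ∃ᶠ v in 𝓝[>] x, η * (v - x) < |f x * (v - x) - hkIntegral f x v|}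
  set T : Set (ℝ × ℝ) := {p | p.1 ∈ E ∧ p.1 < p.2 ∧ p.2 ≤ b ∧ p.2 - p.1 < δ p.1 ∧
    η * (p.2 - p.1) < |f p.1 * (p.2 - p.1) - hkIntegral f p.1 p.2|}
  have hT : ∀ x ∈ E, ∀ ρ > 0, ∃ p ∈ T, p.2 - p.1 ≤ ρ ∧ p.1 = x := by
    intro x hx ρ hρ
    have hr : x < x + min ρ (min (δ x) (b - x)) := lt_add_of_pos_right x
      (lt_min hρ (lt_min (hδ.1 x (Ico_subset_Icc_self hx.1)) (sub_pos.2 hx.1.2)))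
    obtain ⟨v, hv, hvx, hvr⟩ := (hx.2.and_eventually (Ioo_mem_nhdsGT hr)).exists
    rw [← sub_lt_iff_lt_add', lt_min_iff, lt_min_iff] at hvr
    exact ⟨(x, v), ⟨hx, hvx, by linarith, hvr.2.1, hv⟩, hvr.1.le, rfl⟩
  obtain ⟨W, hWT, hW, hWdisj, hWcover⟩ := Vitali.exists_disjoint_covering_ae volume E T 6
    (fun p => p.2 - p.1) Prod.fst (fun p => Icc p.1 p.2)
    (fun p hp => by
      rw [Real.closedBall_eq_Icc]; exact Icc_subset_Icc (by linarith [hp.2.1]) (by linarith))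
    (fun p _ => volume_closedBall_le_six_mul_volume_Icc p.1 p.2)
    (fun p hp => by simpa using hp.2.1) (fun _ _ => isClosed_Icc) hT
  calc volume E ≤ volume (⋃ p ∈ W, Icc p.1 p.2) := measure_mono_ae (ae_le_set.2 hWcover)
    _ ≤ ∑' p : W, volume (Icc p.1.1 p.1.2) := measure_biUnion_le _ hW _
    _ ≤ ENNReal.ofReal (2 * ε / η) :=
      hδ.tsum_volume_le hf hab hη (fun p hp => ⟨(hWT hp).1.1.1, (hWT hp).2⟩) hWdisj

namespace HKIntegral

lemma volume_setOf_frequently_lt (hf : HKIntegral a b f α) (hab : a ≤ b) {η : ℝ} (hη : 0 < η) :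
    volume {x ∈ Ico a b | ∃ᶠ v in 𝓝[>] x, η * (v - x) < |f x * (v - x) - hkIntegral f x v|}
      = 0 := by
  refine le_antisymm (ENNReal.le_of_forall_pos_le_add fun ε hε _ => ?_) zero_le
  obtain ⟨δ, hδ⟩ := hf.exists_isHKGauge (ε := η * ε / 2) (by positivity)
  refine (hδ.volume_setOf_frequently_lt_le hf hab hη).trans ?_
  rw [zero_add, show 2 * (η * ε / 2) / η = ε by field_simp]
  exact ENNReal.ofReal_coe_nnreal.le

lemma hasDerivWithinAt_Ici {x : ℝ} (hf : HKIntegral a b f α) (hx : x ∈ Ico a b)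
    (h : ∀ η > 0, ∀ᶠ v in 𝓝[>] x, |f x * (v - x) - hkIntegral f x v| ≤ η * (v - x)) :
    HasDerivWithinAt (hkIntegral f a) (f x) (Ici x) x := by
  refine (hasDerivWithinAt_iff_isLittleO.2 (Asymptotics.isLittleO_iff.2 fun η hη => ?_)).Ici_of_Ioi
  filter_upwards [h η hη, Ioo_mem_nhdsGT hx.2] with v hv hvb
  rw [← hf.hkIntegral_add le_rfl hx.1 hvb.1.le hvb.2.le, add_sub_cancel_left, smul_eq_mul,
    Real.norm_eq_abs, Real.norm_eq_abs, abs_of_pos (sub_pos.2 hvb.1), abs_sub_comm,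
    mul_comm (v - x)]
  exact hv

theorem ae_hasDerivWithinAt_Ici (hf : HKIntegral a b f α) (hab : a ≤ b) :
    ∀ᵐ x ∂volume.restrict (Icc a b), HasDerivWithinAt (hkIntegral f a) (f x) (Ici x) x := by
  have hgood : ∀ᵐ x, ∀ m : ℕ, x ∈ Ico a b →
      ∀ᶠ v in 𝓝[>] x, |f x * (v - x) - hkIntegral f x v| ≤ 1 / (m + 1) * (v - x) := by
    refine ae_all_iff.2 fun m => ?_
    filter_upwards [measure_eq_zero_iff_ae_notMem.1
      (hf.volume_setOf_frequently_lt hab (η := 1 / (m + 1)) Nat.one_div_pos_of_nat)] with x hx hxI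
    simpa [hxI, not_frequently, not_lt] using hx
  rw [← Measure.restrict_congr_set Ico_ae_eq_Icc]
  filter_upwards [ae_restrict_of_ae hgood, ae_restrict_mem measurableSet_Ico] with x hx hxI
  refine hf.hasDerivWithinAt_Ici hxI fun η hη => ?_
  obtain ⟨m, hm⟩ := exists_nat_one_div_lt hη
  filter_upwards [hx m hxI, self_mem_nhdsWithin] with v hv (hvx : x < v)
  exact hv.trans (mul_le_mul_of_nonneg_right hm.le (sub_pos.2 hvx).le)

end HKIntegral

end HKIntegralTheory

/-- Every Henstock–Kurzweil integrable function on `[a,b]` is Lebesgue measurable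
(with respect to Lebesgue measure restricted to `[a,b]`). -/
theorem hk_integrable_measurable (a b : ℝ) (hab : a ≤ b) (f : ℝ → ℝ) (α : ℝ)
    (hf : HKIntegral a b f α) :
    AEMeasurable f (MeasureTheory.volume.restrict (Set.Icc a b)) :=
  (measurable_derivWithin_Ici (hkIntegral f a)).aemeasurable.congr <|
    (hf.ae_hasDerivWithinAt_Ici hab).mono fun x hx => hx.derivWithin (uniqueDiffWithinAt_Ici x)
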